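/- arXiv:2212.07377 — 2 statements merged into one kernel-verified Lean document; each statement's English description precedes it below -/
import Mathlib

section
/- Let W : ℝ² × ℝ² → ℝ be continuous and symmetric, and suppose that ∬ W(x,y) f(x) conj(f(y)) dx dy ≥ 0 for every complex Schwartz function f on ℝ² with ∫ f(x) dx = 0. Then for every n ∈ ℕ and every choice of points x₁,…,x_n, y₁,…,y_n in ℝ², one has ∑_{i,j=1}^n [ W(x_i,x_j) − W(y_i,x_j) − W(x_i,y_j) + W(y_i,y_j) ] ≥ 0. -/
set_option maxHeartbeats 1000000

open MeasureTheory Filter Metric Function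
open scoped Convolution Topology ContDiff

noncomputable def cpsBump (k : ℕ) : ContDiffBump (0 : ℝ × ℝ) where
  rIn := (1 : ℝ) / (k + 1) / 2
  rOut := (1 : ℝ) / (k + 1)
  rIn_pos := by positivity
  rIn_lt_rOut := by
    have h : (0:ℝ) < 1 / (k + 1) := by positivity
    linarith

noncomputable def cpsB (k : ℕ) : (ℝ × ℝ) → ℝ := (cpsBump k).normed volume

lemma cpsB_cont (k : ℕ) : Continuous (cpsB k) := (cpsBump k).continuous_normed

lemma cpsB_supp (k : ℕ) : HasCompactSupport (cpsB k) :=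
  (cpsBump k).hasCompactSupport_normed

lemma cps_conv_eq (k : ℕ) (g : (ℝ × ℝ) → ℝ) (b : ℝ × ℝ) :
    ∫ v, g v * cpsB k (v - b) =
      (cpsB k ⋆[ContinuousLinearMap.lsmul ℝ ℝ, volume] g) b := by
  rw [convolution_def,
    ← integral_sub_left_eq_self (fun v => g v * cpsB k (v - b)) volume b]
  congr 1; funext t
  simp only [ContinuousLinearMap.lsmul_apply, smul_eq_mul]
  rw [sub_sub_cancel_left, show cpsB k (-t) = cpsB k t from
    (cpsBump k).normed_neg t, mul_comm]

lemma cps_prod_cs (u v : (ℝ × ℝ) → ℝ) (W : (ℝ × ℝ) → (ℝ × ℝ) → ℝ)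
    (hu : HasCompactSupport u) (hv : HasCompactSupport v) :
    HasCompactSupport fun p : (ℝ × ℝ) × (ℝ × ℝ) => W p.1 p.2 * (u p.1 * v p.2) := by
  apply HasCompactSupport.intro (IsCompact.prod hu hv)
  intro p hp
  have h : p.1 ∉ tsupport u ∨ p.2 ∉ tsupport v := by
    by_contra h; push_neg at h
    exact hp (Set.mem_prod.mpr ⟨h.1, h.2⟩)
  rcases h with h | h
  · rw [image_eq_zero_of_notMem_tsupport h]; ring
  · rw [image_eq_zero_of_notMem_tsupport h]; ring

lemma cps_fubini (u : (ℝ × ℝ) × (ℝ × ℝ) → ℝ) (hc : Continuous u)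
    (hs : HasCompactSupport u) :
    ∫ x, ∫ y, u (x, y) = ∫ p, u p ∂((volume : Measure (ℝ × ℝ)).prod volume) := by
  have hint : Integrable u ((volume : Measure (ℝ × ℝ)).prod volume) := by
    rw [← Measure.volume_eq_prod]
    exact hc.integrable_of_hasCompactSupport hs
  exact MeasureTheory.integral_integral hint

/-- A smooth compactly supported function is a Schwartz function. -/
noncomputable def cpsToSchwartz (f : (ℝ × ℝ) → ℂ) (hsm : ContDiff ℝ (⊤ : ℕ∞) f)
    (hcs : HasCompactSupport f) : SchwartzMap (ℝ × ℝ) ℂ where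
  toFun := f
  smooth' := hsm
  decay' := by
    intro k m
    have h1 : Continuous fun x : ℝ × ℝ => ‖x‖ ^ k * ‖iteratedFDeriv ℝ m f x‖ :=
      (continuous_norm.pow k).mul
        (hsm.continuous_iteratedFDeriv (mod_cast le_top)).norm
    have h2 : HasCompactSupport fun x : ℝ × ℝ =>
        ‖x‖ ^ k * ‖iteratedFDeriv ℝ m f x‖ :=
      ((hcs.iteratedFDeriv m).norm).mul_left
    obtain ⟨C, hC⟩ := h1.bounded_above_of_compact_support h2
    refine ⟨C, fun v => (le_abs_self _).trans ?_⟩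
    rw [← Real.norm_eq_abs]
    exact hC v

theorem conditional_pos_semidef_discrete
    (W : (ℝ × ℝ) → (ℝ × ℝ) → ℝ)
    (hcont : Continuous fun p : (ℝ × ℝ) × (ℝ × ℝ) => W p.1 p.2)
    (hsymm : ∀ x y, W x y = W y x)
    (hpos : ∀ f : SchwartzMap (ℝ × ℝ) ℂ, (∫ x, f x) = 0 →
      0 ≤ ∫ x, ∫ y, W x y * (f x * (starRingEnd ℂ) (f y)).re)
    (n : ℕ) (x y : Fin n → ℝ × ℝ) :
    0 ≤ ∑ i : Fin n, ∑ j : Fin n,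
      (W (x i) (x j) - W (y i) (x j) - W (x i) (y j) + W (y i) (y j)) := by
  classical
  set c : Fin n ⊕ Fin n → ℝ × ℝ := Sum.elim x y with hc
  set s : Fin n ⊕ Fin n → ℝ := Sum.elim (fun _ => (1 : ℝ)) (fun _ => (-1 : ℝ)) with hs
  -- the mollified sums of Dirac deltas
  set g : ℕ → (ℝ × ℝ) → ℝ := fun k v => ∑ i : Fin n ⊕ Fin n, s i * cpsB k (v - c i) with hg
  -- basic properties of translates of the bump
  have hBt_cont : ∀ (k : ℕ) (a : ℝ × ℝ), Continuous fun v => cpsB k (v - a) :=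
    fun k a => (cpsB_cont k).comp (continuous_id.sub continuous_const)
  have hBt_supp : ∀ (k : ℕ) (a : ℝ × ℝ), HasCompactSupport fun v => cpsB k (v - a) :=
    fun k a => (cpsB_supp k).comp_homeomorph (Homeomorph.subRight a)
  have hBt_int : ∀ (k : ℕ) (a : ℝ × ℝ), Integrable (fun v => cpsB k (v - a)) volume :=
    fun k a => (hBt_cont k a).integrable_of_hasCompactSupport (hBt_supp k a)
  have hgc : ∀ k, Continuous (g k) := fun k =>
    continuous_finset_sum _ fun i _ => continuous_const.mul (hBt_cont k (c i))
  have hgs : ∀ k, HasCompactSupport (g k) := by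
    intro k
    have hK : IsCompact (⋃ i : Fin n ⊕ Fin n, tsupport fun v => cpsB k (v - c i)) :=
      isCompact_iUnion fun i => hBt_supp k (c i)
    apply HasCompactSupport.intro hK
    intro v hv
    simp only [Set.mem_iUnion, not_exists] at hv
    apply Finset.sum_eq_zero
    intro i _
    rw [image_eq_zero_of_notMem_tsupport (hv i)]
    ring
  have hgsm : ∀ k, ContDiff ℝ (⊤ : ℕ∞) (g k) := by
    intro k
    apply ContDiff.sum
    intro i _
    exact ContDiff.mul contDiff_const
      (((cpsBump k).contDiff_normed (n := ⊤)).comp (contDiff_id.sub contDiff_const))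
  -- the Schwartz functions
  have hsum_s : ∑ i : Fin n ⊕ Fin n, s i = 0 := by
    simp [hs, Fintype.sum_sum_type]
  set F : ℕ → SchwartzMap (ℝ × ℝ) ℂ := fun k =>
    cpsToSchwartz (fun v => (g k v : ℂ))
      (Complex.ofRealCLM.contDiff.comp (hgsm k))
      ((hgs k).comp_left (g := fun r : ℝ => (r : ℂ)) Complex.ofReal_zero) with hF
  have hFval : ∀ k v, F k v = (g k v : ℂ) := fun k v => rfl
  have hFint : ∀ k, (∫ v, F k v) = 0 := by
    intro k
    have : (∫ v, F k v) = ((∫ v, g k v : ℝ) : ℂ) := by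
      simp_rw [hFval]; exact integral_ofReal
    rw [this]
    have hgint : (∫ v, g k v) = ∑ i : Fin n ⊕ Fin n, s i * ∫ v, cpsB k (v - c i) := by
      rw [hg]
      rw [integral_finset_sum _ fun i _ => ((hBt_int k (c i)).const_mul (s i))]
      exact Finset.sum_congr rfl fun i _ => integral_const_mul _ _
    have hint1 : ∀ a : ℝ × ℝ, (∫ v, cpsB k (v - a)) = 1 := by
      intro a
      rw [integral_sub_right_eq_self (cpsB k) a]
      exact (cpsBump k).integral_normed
    rw [hgint]
    simp only [hint1, mul_one, hsum_s]
    simp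
  -- positivity from the hypothesis
  have hJpos : ∀ k, 0 ≤ ∫ v, ∫ w, W v w * (g k v * g k w) := by
    intro k
    have := hpos (F k) (hFint k)
    simpa only [hFval, Complex.conj_ofReal, ← Complex.ofReal_mul,
      Complex.ofReal_re] using this
  -- the double convolution
  set T : ℕ → (ℝ × ℝ) → (ℝ × ℝ) → ℝ := fun k a b =>
    (cpsB k ⋆[ContinuousLinearMap.lsmul ℝ ℝ, volume]
      (fun v => (cpsB k ⋆[ContinuousLinearMap.lsmul ℝ ℝ, volume] (W v)) b)) a with hT
  -- rewrite the integral as a sum of double convolutions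
  have hJeq : ∀ k, (∫ v, ∫ w, W v w * (g k v * g k w)) =
      ∑ i : Fin n ⊕ Fin n, ∑ j : Fin n ⊕ Fin n, s i * s j * T k (c i) (c j) := by
    intro k
    have hterm_cont : ∀ i j : Fin n ⊕ Fin n, Continuous fun p : (ℝ × ℝ) × (ℝ × ℝ) =>
        W p.1 p.2 * (cpsB k (p.1 - c i) * cpsB k (p.2 - c j)) :=
      fun i j => hcont.mul
        (((hBt_cont k (c i)).comp continuous_fst).mul
          ((hBt_cont k (c j)).comp continuous_snd))
    have hterm_cs : ∀ i j : Fin n ⊕ Fin n, HasCompactSupport fun p : (ℝ × ℝ) × (ℝ × ℝ) =>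
        W p.1 p.2 * (cpsB k (p.1 - c i) * cpsB k (p.2 - c j)) :=
      fun i j => cps_prod_cs (fun v => cpsB k (v - c i)) (fun v => cpsB k (v - c j)) W
        (hBt_supp k (c i)) (hBt_supp k (c j))
    have hterm_int : ∀ i j : Fin n ⊕ Fin n, Integrable
        (fun p : (ℝ × ℝ) × (ℝ × ℝ) =>
          W p.1 p.2 * (cpsB k (p.1 - c i) * cpsB k (p.2 - c j)))
        ((volume : Measure (ℝ × ℝ)).prod volume) := by
      intro i j
      rw [← Measure.volume_eq_prod]
      exact (hterm_cont i j).integrable_of_hasCompactSupport (hterm_cs i j)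
    -- step 1: Fubini to the product space
    have h1 : (∫ v, ∫ w, W v w * (g k v * g k w)) =
        ∫ p, W p.1 p.2 * (g k p.1 * g k p.2)
          ∂((volume : Measure (ℝ × ℝ)).prod volume) :=
      cps_fubini (fun p => W p.1 p.2 * (g k p.1 * g k p.2))
        (hcont.mul (((hgc k).comp continuous_fst).mul
        ((hgc k).comp continuous_snd))) (cps_prod_cs (g k) (g k) W (hgs k) (hgs k))
    -- step 2: pointwise expansion
    have h2 : ∀ p : (ℝ × ℝ) × (ℝ × ℝ), W p.1 p.2 * (g k p.1 * g k p.2) =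
        ∑ i : Fin n ⊕ Fin n, ∑ j : Fin n ⊕ Fin n,
          (s i * s j) * (W p.1 p.2 * (cpsB k (p.1 - c i) * cpsB k (p.2 - c j))) := by
      intro p
      rw [hg, Finset.sum_mul_sum, Finset.mul_sum]
      exact Finset.sum_congr rfl fun i _ => by
        rw [Finset.mul_sum]; exact Finset.sum_congr rfl fun j _ => by ring
    -- step 3: exchange integral and sums
    have h3 : (∫ p, W p.1 p.2 * (g k p.1 * g k p.2)
          ∂((volume : Measure (ℝ × ℝ)).prod volume)) =
        ∑ i : Fin n ⊕ Fin n, ∑ j : Fin n ⊕ Fin n, (s i * s j) *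
          ∫ p, W p.1 p.2 * (cpsB k (p.1 - c i) * cpsB k (p.2 - c j))
            ∂((volume : Measure (ℝ × ℝ)).prod volume) := by
      simp_rw [h2]
      rw [integral_finset_sum _ fun i _ =>
        integrable_finset_sum _ fun j _ => ((hterm_int i j).const_mul _)]
      refine Finset.sum_congr rfl fun i _ => ?_
      rw [integral_finset_sum _ fun j _ => ((hterm_int i j).const_mul _)]
      exact Finset.sum_congr rfl fun j _ => integral_const_mul _ _
    -- step 4: each term is a double convolution
    have h4 : ∀ i j : Fin n ⊕ Fin n,
        (∫ p, W p.1 p.2 * (cpsB k (p.1 - c i) * cpsB k (p.2 - c j))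
          ∂((volume : Measure (ℝ × ℝ)).prod volume)) = T k (c i) (c j) := by
      intro i j
      rw [← cps_fubini (fun p => W p.1 p.2 * (cpsB k (p.1 - c i) * cpsB k (p.2 - c j)))
        (hterm_cont i j) (hterm_cs i j)]
      have hinner : ∀ v : ℝ × ℝ,
          (∫ w, W v w * (cpsB k (v - c i) * cpsB k (w - c j))) =
            ((cpsB k ⋆[ContinuousLinearMap.lsmul ℝ ℝ, volume] (W v)) (c j))
              * cpsB k (v - c i) := by
        intro v
        have : (∫ w, W v w * (cpsB k (v - c i) * cpsB k (w - c j))) =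
            cpsB k (v - c i) * ∫ w, W v w * cpsB k (w - c j) := by
          rw [← integral_const_mul]
          congr 1; funext w; ring
        rw [this, cps_conv_eq k (W v) (c j), mul_comm]
      simp_rw [hinner]
      rw [cps_conv_eq k _ (c i)]
    rw [h1, h3]
    exact Finset.sum_congr rfl fun i _ => Finset.sum_congr rfl fun j _ => by
      rw [h4 i j]
  -- convergence of the double convolutions
  have hrout : Tendsto (fun k : ℕ => (cpsBump k).rOut) atTop (𝓝 0) := by
    have : (fun k : ℕ => (cpsBump k).rOut) = fun k : ℕ => 1 / ((k : ℝ) + 1) := rfl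
    rw [this]
    exact tendsto_one_div_add_atTop_nhds_zero_nat
  have hkey : ∀ a b : ℝ × ℝ, Tendsto (fun k => T k a b) atTop (𝓝 (W a b)) := by
    intro a b
    have hinner : Tendsto
        (uncurry fun (k : ℕ) (v : ℝ × ℝ) =>
          (cpsB k ⋆[ContinuousLinearMap.lsmul ℝ ℝ, volume] (W v)) b)
        (atTop ×ˢ 𝓝 a) (𝓝 (W a b)) := by
      apply ContDiffBump.convolution_tendsto_right
        (φ := fun p : ℕ × (ℝ × ℝ) => cpsBump p.1)
        (g := fun p : ℕ × (ℝ × ℝ) => W p.2) (k := fun _ => b)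
      · exact hrout.comp tendsto_fst
      · exact Eventually.of_forall fun p =>
          (hcont.comp (Continuous.prodMk_right p.2)).aestronglyMeasurable
      · have hmap : Tendsto (fun z : (ℕ × (ℝ × ℝ)) × (ℝ × ℝ) => (z.1.2, z.2))
            ((atTop ×ˢ 𝓝 a) ×ˢ 𝓝 b) (𝓝 (a, b)) :=
          (tendsto_snd.comp tendsto_fst).prodMk_nhds tendsto_snd
        exact (hcont.tendsto (a, b)).comp hmap
      · exact tendsto_const_nhds
    have hmeas : ∀ k : ℕ, AEStronglyMeasurable
        (fun v : ℝ × ℝ => (cpsB k ⋆[ContinuousLinearMap.lsmul ℝ ℝ, volume] (W v)) b)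
        volume := by
      intro k
      have heq : (fun v : ℝ × ℝ =>
          (cpsB k ⋆[ContinuousLinearMap.lsmul ℝ ℝ, volume] (W v)) b) =
          fun v => ∫ w, W v w * cpsB k (w - b) := by
        funext v; rw [← cps_conv_eq k (W v) b]
      rw [heq]
      exact (StronglyMeasurable.integral_prod_right'
        (f := fun q : (ℝ × ℝ) × (ℝ × ℝ) => W q.1 q.2 * cpsB k (q.2 - b))
        ((hcont.mul ((hBt_cont k b).comp continuous_snd)).stronglyMeasurable)).aestronglyMeasurable
    exact ContDiffBump.convolution_tendsto_right (φ := cpsBump)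
      (g := fun (k : ℕ) (v : ℝ × ℝ) =>
        (cpsB k ⋆[ContinuousLinearMap.lsmul ℝ ℝ, volume] (W v)) b)
      (k := fun _ => a) hrout (Eventually.of_forall hmeas) hinner tendsto_const_nhds
  -- pass to the limit
  have hlim : Tendsto (fun k => ∑ i : Fin n ⊕ Fin n, ∑ j : Fin n ⊕ Fin n, s i * s j * T k (c i) (c j))
      atTop (𝓝 (∑ i : Fin n ⊕ Fin n, ∑ j : Fin n ⊕ Fin n, s i * s j * W (c i) (c j))) := by
    apply tendsto_finset_sum
    intro i _
    apply tendsto_finset_sum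
    intro j _
    exact (hkey (c i) (c j)).const_mul _
  have hfinal : 0 ≤ ∑ i : Fin n ⊕ Fin n, ∑ j : Fin n ⊕ Fin n, s i * s j * W (c i) (c j) := by
    refine ge_of_tendsto hlim (Eventually.of_forall fun k => ?_)
    rw [← hJeq k]
    exact hJpos k
  -- identify the limit with the target sum
  have hident : (∑ i : Fin n ⊕ Fin n, ∑ j : Fin n ⊕ Fin n, s i * s j * W (c i) (c j)) =
      ∑ i : Fin n, ∑ j : Fin n,
        (W (x i) (x j) - W (y i) (x j) - W (x i) (y j) + W (y i) (y j)) := by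
    simp only [hs, hc, Fintype.sum_sum_type, Sum.elim_inl, Sum.elim_inr]
    simp only [← Finset.sum_add_distrib]
    exact Finset.sum_congr rfl fun i _ => Finset.sum_congr rfl fun j _ => by ring
  rw [← hident]
  exact hfinal
end

section
/- For all M > 0 and all complex a, b with positive real parts, 4 ∂_a ∂_b ∫_0^∞ exp(−(t/2) M a − (M/(2t)) b) dt/(2t) = M² ∫_0^∞ exp(−(t/2) M a − (M/(2t)) b) dt/(2t), where differentiation under the integral sign is justified by absolute convergence. -/
/-!
Write `F a b = K₋₁(M a / 2, M b / 2) / 2`, where `Kₖ(p, q) = ∫₀^∞ e^{-p t - q / t} tᵏ dt`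
(up to elementary factors the Bessel function `K_{k+1}(2 √(p q))`). For `Re p, Re q > 0` the
integrand is dominated, locally uniformly in `p` and `q`, by the same kernel with `p, q` replaced
by half their real parts, which is integrable because `tᵏ e^{-α t - β / t} ≤ C e^{-α t / 2}`.
Differentiating under the integral sign gives `∂ₚ Kₖ = -Kₖ₊₁` and `∂_q Kₖ = -Kₖ₋₁`, hence
`4 ∂ₐ ∂_b F = 4 (M / 2)² K₋₁ / 2 = M² F`.
-/

open MeasureTheory Complex Set Topology

lemma pow_le_factorial_div_pow_mul_exp {x c : ℝ} (hx : 0 ≤ x) (hc : 0 < c) (n : ℕ) :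
    x ^ n ≤ n.factorial / c ^ n * Real.exp (c * x) := by
  have h := Real.pow_div_factorial_le_exp _ (mul_nonneg hc.le hx) n
  rw [div_le_iff₀ (by positivity), mul_pow] at h
  rw [div_mul_eq_mul_div, le_div_iff₀ (by positivity)]
  linarith

lemma exp_neg_mul_sub_div_mul_zpow_le {α β : ℝ} (hα : 0 < α) (hβ : 0 < β) (k : ℤ) :
    ∃ C, ∀ t > 0, Real.exp (-(α * t) - β / t) * t ^ k ≤ C * Real.exp (-(α / 2) * t) := by
  obtain ⟨n, rfl | rfl⟩ := k.eq_nat_or_neg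
  · refine ⟨n.factorial / (α / 2) ^ n, fun t ht => ?_⟩
    calc Real.exp (-(α * t) - β / t) * t ^ (n : ℤ)
        ≤ Real.exp (-(α * t)) * (n.factorial / (α / 2) ^ n * Real.exp (α / 2 * t)) := by
          rw [zpow_natCast]
          gcongr
          · linarith [div_pos hβ ht]
          · exact pow_le_factorial_div_pow_mul_exp ht.le (half_pos hα) n
      _ = n.factorial / (α / 2) ^ n * Real.exp (-(α / 2) * t) := by
          rw [mul_left_comm, ← Real.exp_add]; ring_nf
  · refine ⟨n.factorial / β ^ n, fun t ht => ?_⟩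
    calc Real.exp (-(α * t) - β / t) * t ^ (-(n : ℤ))
        = Real.exp (-(α * t)) * Real.exp (-(β * t⁻¹)) * t⁻¹ ^ n := by
          rw [zpow_neg, zpow_natCast, inv_pow, sub_eq_add_neg, Real.exp_add, div_eq_mul_inv]
      _ ≤ Real.exp (-(α * t)) * Real.exp (-(β * t⁻¹)) *
            (n.factorial / β ^ n * Real.exp (β * t⁻¹)) := by
          gcongr
          exact pow_le_factorial_div_pow_mul_exp (inv_nonneg.2 ht.le) hβ n
      _ = n.factorial / β ^ n * Real.exp (-(α * t)) := by
          have h : Real.exp (-(β * t⁻¹)) * Real.exp (β * t⁻¹) = 1 := by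
            rw [← Real.exp_add, neg_add_cancel, Real.exp_zero]
          linear_combination (n.factorial / β ^ n * Real.exp (-(α * t))) * h
      _ ≤ n.factorial / β ^ n * Real.exp (-(α / 2) * t) := by
          gcongr; nlinarith

lemma integrableOn_exp_neg_mul_sub_div_mul_zpow {α β : ℝ} (hα : 0 < α) (hβ : 0 < β) (k : ℤ) :
    IntegrableOn (fun t => Real.exp (-(α * t) - β / t) * t ^ k) (Ioi 0) := by
  obtain ⟨C, hC⟩ := exp_neg_mul_sub_div_mul_zpow_le hα hβ k
  have hcont : ContinuousOn (fun t : ℝ => Real.exp (-(α * t) - β / t) * t ^ k) (Ioi 0) := by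
    fun_prop (disch := intro t (ht : 0 < t); simp [ht.ne'])
  refine ((exp_neg_integrableOn_Ioi 0 (half_pos hα)).const_mul C).mono'
    (hcont.aestronglyMeasurable measurableSet_Ioi) ?_
  filter_upwards [ae_restrict_mem measurableSet_Ioi] with t (ht : 0 < t)
  rw [Real.norm_of_nonneg (by positivity)]
  exact hC t ht

noncomputable def besselIntegrand (k : ℤ) (p q : ℂ) (t : ℝ) : ℂ :=
  cexp (-(p * t) - q / t) * (t : ℂ) ^ k

noncomputable def besselKIntegral (k : ℤ) (p q : ℂ) : ℂ :=
  ∫ t in Ioi (0 : ℝ), besselIntegrand k p q t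

section

variable {k : ℤ} {p q : ℂ}

lemma norm_besselIntegrand {t : ℝ} (ht : 0 < t) :
    ‖besselIntegrand k p q t‖ = Real.exp (-(p.re * t) - q.re / t) * t ^ k := by
  simp [besselIntegrand, Complex.norm_exp, norm_zpow, abs_of_pos ht]

lemma norm_besselIntegrand_le {α β t : ℝ} (ht : 0 < t) (hα : α ≤ p.re) (hβ : β ≤ q.re) :
    ‖besselIntegrand k p q t‖ ≤ Real.exp (-(α * t) - β / t) * t ^ k := by
  rw [norm_besselIntegrand ht]
  gcongr

lemma continuousOn_besselIntegrand : ContinuousOn (besselIntegrand k p q) (Ioi 0) := by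
  intro t (ht : 0 < t)
  have ht' : (t : ℂ) ≠ 0 := ofReal_ne_zero.2 ht.ne'
  unfold besselIntegrand
  exact ContinuousAt.continuousWithinAt (by fun_prop (disch := simp [ht']))

lemma integrableOn_besselIntegrand (hp : 0 < p.re) (hq : 0 < q.re) :
    IntegrableOn (besselIntegrand k p q) (Ioi 0) :=
  (integrableOn_exp_neg_mul_sub_div_mul_zpow hp hq k).mono'
    (continuousOn_besselIntegrand.aestronglyMeasurable measurableSet_Ioi)
    ((ae_restrict_mem measurableSet_Ioi).mono fun _ ht =>
      norm_besselIntegrand_le ht le_rfl le_rfl)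

lemma hasDerivAt_besselIntegrand_left {t : ℝ} (ht : t ≠ 0) :
    HasDerivAt (fun p => besselIntegrand k p q t) (-besselIntegrand (k + 1) p q t) p := by
  have h : HasDerivAt (fun p : ℂ => -(p * t) - q / t) (-t) p := by
    simpa using ((hasDerivAt_id p).mul_const (t : ℂ)).neg.sub_const (q / t)
  refine (h.cexp.mul_const ((t : ℂ) ^ k)).congr_deriv ?_
  rw [besselIntegrand, zpow_add_one₀ (ofReal_ne_zero.2 ht)]
  ring

lemma hasDerivAt_besselIntegrand_right {t : ℝ} (ht : t ≠ 0) :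
    HasDerivAt (fun q => besselIntegrand k p q t) (-besselIntegrand (k - 1) p q t) q := by
  have h : HasDerivAt (fun q : ℂ => -(p * t) - q / t) (-(t : ℂ)⁻¹) q := by
    simpa using ((hasDerivAt_id q).div_const (t : ℂ)).const_sub (-(p * t))
  refine (h.cexp.mul_const ((t : ℂ) ^ k)).congr_deriv ?_
  rw [besselIntegrand, zpow_sub_one₀ (ofReal_ne_zero.2 ht)]
  ring

lemma half_re_lt_re_mem_nhds {z : ℂ} (hz : 0 < z.re) : {w : ℂ | z.re / 2 < w.re} ∈ 𝓝 z :=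
  (isOpen_lt continuous_const Complex.continuous_re).mem_nhds (half_lt_self hz)

theorem hasDerivAt_besselKIntegral_left (hp : 0 < p.re) (hq : 0 < q.re) :
    HasDerivAt (fun p => besselKIntegral k p q) (-besselKIntegral (k + 1) p q) p := by
  have h := hasDerivAt_integral_of_dominated_loc_of_deriv_le (μ := volume.restrict (Ioi 0))
    (F := fun p t => besselIntegrand k p q t) (F' := fun p t => -besselIntegrand (k + 1) p q t)
    (half_re_lt_re_mem_nhds hp)
    (.of_forall fun _ => continuousOn_besselIntegrand.aestronglyMeasurable measurableSet_Ioi)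
    (integrableOn_besselIntegrand hp hq)
    (continuousOn_besselIntegrand.neg.aestronglyMeasurable measurableSet_Ioi)
    ((ae_restrict_mem measurableSet_Ioi).mono fun t (ht : 0 < t) p' (hp' : p.re / 2 < p'.re) =>
      (norm_neg _).trans_le (norm_besselIntegrand_le ht hp'.le le_rfl))
    (integrableOn_exp_neg_mul_sub_div_mul_zpow (half_pos hp) hq (k + 1))
    ((ae_restrict_mem measurableSet_Ioi).mono fun t (ht : 0 < t) _ _ =>
      hasDerivAt_besselIntegrand_left ht.ne')
  simpa only [besselKIntegral, integral_neg] using h.2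

theorem hasDerivAt_besselKIntegral_right (hp : 0 < p.re) (hq : 0 < q.re) :
    HasDerivAt (fun q => besselKIntegral k p q) (-besselKIntegral (k - 1) p q) q := by
  have h := hasDerivAt_integral_of_dominated_loc_of_deriv_le (μ := volume.restrict (Ioi 0))
    (F := fun q t => besselIntegrand k p q t) (F' := fun q t => -besselIntegrand (k - 1) p q t)
    (half_re_lt_re_mem_nhds hq)
    (.of_forall fun _ => continuousOn_besselIntegrand.aestronglyMeasurable measurableSet_Ioi)
    (integrableOn_besselIntegrand hp hq)
    (continuousOn_besselIntegrand.neg.aestronglyMeasurable measurableSet_Ioi)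
    ((ae_restrict_mem measurableSet_Ioi).mono fun t (ht : 0 < t) q' (hq' : q.re / 2 < q'.re) =>
      (norm_neg _).trans_le (norm_besselIntegrand_le ht le_rfl hq'.le))
    (integrableOn_exp_neg_mul_sub_div_mul_zpow hp (half_pos hq) (k - 1))
    ((ae_restrict_mem measurableSet_Ioi).mono fun t (ht : 0 < t) _ _ =>
      hasDerivAt_besselIntegrand_right ht.ne')
  simpa only [besselKIntegral, integral_neg] using h.2

end

lemma setIntegral_cexp_div_eq_besselKIntegral (M : ℝ) (a b : ℂ) :
    ∫ t in Ioi (0 : ℝ),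
        cexp (-((t : ℂ) / 2) * M * a - ((M : ℂ) / (2 * (t : ℂ))) * b) / (2 * (t : ℂ))
      = besselKIntegral (-1) (M * a / 2) (M * b / 2) / 2 := by
  rw [besselKIntegral, ← integral_div]
  refine setIntegral_congr_fun measurableSet_Ioi fun t _ => ?_
  simp only [besselIntegrand, zpow_neg_one]
  ring_nf

theorem bessel_integral_deriv (M : ℝ) (hM : 0 < M) (a b : ℂ)
    (ha : 0 < a.re) (hb : 0 < b.re)
    (F : ℂ → ℂ → ℂ)
    (hF : ∀ a' b' : ℂ, F a' b' = ∫ t in Set.Ioi (0:ℝ),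
      Complex.exp (-((t:ℂ)/2) * M * a' - ((M:ℂ)/(2*(t:ℂ))) * b') / (2*(t:ℂ))) :
    4 * deriv (fun a' => deriv (fun b' => F a' b') b) a = M ^ 2 * F a b := by
  have hF' : ∀ a' b', F a' b' = besselKIntegral (-1) (M * a' / 2) (M * b' / 2) / 2 :=
    fun a' b' => (hF a' b').trans (setIntegral_cexp_div_eq_besselKIntegral M a' b')
  have hre : ∀ z : ℂ, 0 < z.re → 0 < (M * z / 2).re := fun z hz => by
    simpa using mul_pos hM hz
  have hscale : ∀ z : ℂ, HasDerivAt (fun w : ℂ => M * w / 2) (M / 2) z := fun z => by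
    simpa using ((hasDerivAt_id z).const_mul (M : ℂ)).div_const 2
  have hinner : ∀ a', 0 < a'.re → HasDerivAt (fun b' => F a' b')
      (-(M / 4) * besselKIntegral (-2) (M * a' / 2) (M * b / 2)) b := by
    intro a' ha'
    simp only [hF']
    have h := (hasDerivAt_besselKIntegral_right (k := -1) (hre a' ha') (hre b hb)).comp b
      (hscale b)
    refine (h.div_const 2).congr_deriv ?_
    norm_num
    ring
  have houter : HasDerivAt (fun a' => -(M / 4) * besselKIntegral (-2) (M * a' / 2) (M * b / 2))
      (-(M / 4) * -besselKIntegral (-1) (M * a / 2) (M * b / 2) * (M / 2)) a := by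
    have h := (hasDerivAt_besselKIntegral_left (k := -2) (hre a ha) (hre b hb)).comp a (hscale a)
    refine (h.const_mul (-(M / 4 : ℂ))).congr_deriv ?_
    norm_num
    ring
  have hderiv : (fun a' => deriv (fun b' => F a' b') b)
      =ᶠ[𝓝 a] fun a' => -(M / 4) * besselKIntegral (-2) (M * a' / 2) (M * b / 2) := by
    filter_upwards [half_re_lt_re_mem_nhds ha] with a' ha'
    exact (hinner a' (by linarith)).deriv
  rw [hderiv.deriv_eq, houter.deriv, hF']
  ring
end
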